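/- Define a ranking function R_n on spanning trees of F_n recursively: R_n(T) = R_{n-1}(T − v_n) if v_n v_{n-1} ∈ T and v_n v_∞ ∉ T; R_n(T) = 2·t_{n-1} − R_{n-1}(T − v_n) + 1 if v_n v_∞ ∈ T and v_n v_{n-1} ∉ T; and appropriate cases when both edges are present. Then the map T ↦ R_n(T) restricted to trees containing exactly one edge at v_n is injective with image contained in {1, ..., 2·t_{n-1}}. -/

import Mathlib

/-- The fan graph `F_n` on vertex set `Fin n`, where index `0` is the hub `v_∞`
and indices `1, …, n-1` correspond to the path vertices `v_2, …, v_n`. -/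
def fanGraph (n : ℕ) : SimpleGraph (Fin n) :=
  SimpleGraph.fromRel (fun a b => (a : ℕ) = 0 ∨ ((a : ℕ) ≠ 0 ∧ (b : ℕ) = (a : ℕ) + 1))

/-- The number of spanning trees of the fan graph `F_n`. -/
noncomputable def fanTreeCount (n : ℕ) : ℕ :=
  Nat.card {H : SimpleGraph (Fin n) // H ≤ fanGraph n ∧ H.IsTree}

lemma fan_adj_last {n : ℕ} (hn : 2 < n) {b : Fin n}
    (h : (fanGraph n).Adj ⟨n - 1, by omega⟩ b) :
    b = ⟨0, by omega⟩ ∨ b = ⟨n - 2, by omega⟩ := by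
  rw [fanGraph, SimpleGraph.fromRel_adj] at h
  obtain ⟨hne, h⟩ := h
  have hb := b.isLt
  simp only [Fin.ext_iff, Fin.val_mk] at h hne ⊢
  omega

lemma fan_unique_nb {n : ℕ} (hn : 2 < n) {H : SimpleGraph (Fin n)}
    (hle : H ≤ fanGraph n)
    (hx : Xor' (H.Adj ⟨n - 1, by omega⟩ ⟨n - 2, by omega⟩) (H.Adj ⟨n - 1, by omega⟩ ⟨0, by omega⟩))
    {x y : Fin n} (hxa : H.Adj ⟨n - 1, by omega⟩ x) (hya : H.Adj ⟨n - 1, by omega⟩ y) :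
    x = y := by
  rcases fan_adj_last hn (hle hxa) with h1 | h1 <;>
    rcases fan_adj_last hn (hle hya) with h2 | h2 <;> subst h1 <;> subst h2 <;> try rfl
  · rcases hx with ⟨ha, hb⟩ | ⟨ha, hb⟩ <;> exact absurd (by assumption) hb
  · rcases hx with ⟨ha, hb⟩ | ⟨ha, hb⟩ <;> exact absurd (by assumption) hb

lemma fan_comap {n : ℕ} (hn : 2 < n) :
    (fanGraph n).comap (Fin.castLE (by omega : n - 1 ≤ n)) = fanGraph (n - 1) := by
  ext u v
  simp [fanGraph, SimpleGraph.fromRel_adj, Fin.ext_iff]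

lemma reach_of_avoid {n : ℕ} (hn : 2 < n) {H : SimpleGraph (Fin n)}
    {c d : Fin n} (p : H.Walk c d) (hp : ∀ x ∈ p.support, (x : ℕ) < n - 1) :
    ∀ (a b : Fin (n - 1)), Fin.castLE (by omega : n - 1 ≤ n) a = c →
      Fin.castLE (by omega) b = d →
      (H.comap (Fin.castLE (by omega : n - 1 ≤ n))).Reachable a b := by
  induction p with
  | nil =>
    intro a b ha hb
    have : a = b := Fin.castLE_injective _ (ha.trans hb.symm)
    exact this ▸ SimpleGraph.Reachable.refl _
  | @cons u v w h q ih =>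
    intro a b ha hb
    have hv : (v : ℕ) < n - 1 := hp v (by simp)
    have hstep : (H.comap (Fin.castLE (by omega : n - 1 ≤ n))).Adj a ⟨v, hv⟩ := by
      show H.Adj _ _
      have h1 : Fin.castLE (by omega : n - 1 ≤ n) ⟨(v : ℕ), hv⟩ = v := by
        apply Fin.ext; simp
      rw [ha, h1]; exact h
    exact hstep.reachable.trans
      (ih (fun x hx => hp x (by simp [hx])) ⟨v, hv⟩ b (by apply Fin.ext; simp) hb)

lemma comap_isTree {n : ℕ} (hn : 2 < n) {H : SimpleGraph (Fin n)}
    (hle : H ≤ fanGraph n) (ht : H.IsTree)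
    (hx : Xor' (H.Adj ⟨n - 1, by omega⟩ ⟨n - 2, by omega⟩)
      (H.Adj ⟨n - 1, by omega⟩ ⟨0, by omega⟩)) :
    H.comap (Fin.castLE (by omega : n - 1 ≤ n)) ≤ fanGraph (n - 1) ∧
      (H.comap (Fin.castLE (by omega : n - 1 ≤ n))).IsTree := by
  have hleq : H.comap (Fin.castLE (by omega : n - 1 ≤ n)) ≤ fanGraph (n - 1) := by
    rw [← fan_comap hn]
    exact fun a b h => hle h
  refine ⟨hleq, ?_, ?_⟩
  · -- Connected
    rw [SimpleGraph.connected_iff]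
    refine ⟨fun u v => ?_, ⟨⟨0, by omega⟩⟩⟩
    set f : Fin (n - 1) → Fin n := Fin.castLE (by omega : n - 1 ≤ n) with hf
    obtain ⟨w⟩ := ht.isConnected.preconnected (f u) (f v)
    set p : H.Walk (f u) (f v) := (w.toPath : H.Walk (f u) (f v)) with hpdef
    have hpath : p.IsPath := w.toPath.prop
    have havoid : ∀ x ∈ p.support, (x : ℕ) < n - 1 := by
      intro x hxs
      by_contra hge
      have hxN : x = ⟨n - 1, by omega⟩ := by
        apply Fin.ext
        have := x.isLt
        simp only [Fin.val_mk]
        omega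
      rw [hxN] at hxs
      -- n-1 is an internal vertex of the path
      have hu : f u ≠ ⟨n - 1, by omega⟩ := by
        simp [hf, Fin.ext_iff]
        have := u.isLt; omega
      have hv : f v ≠ ⟨n - 1, by omega⟩ := by
        simp [hf, Fin.ext_iff]
        have := v.isLt; omega
      set q := p.takeUntil _ hxs with hq
      set r := p.dropUntil _ hxs with hr
      have hqr : q.append r = p := p.take_spec hxs
      -- r is not nil
      have hrn : ¬ r.Nil := SimpleGraph.Walk.not_nil_of_ne (fun hh => hv hh.symm)
      have hqn : ¬ q.reverse.Nil := SimpleGraph.Walk.not_nil_of_ne (fun hh => hu hh.symm)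
      obtain ⟨x1, hadj1, r', hr'⟩ := SimpleGraph.Walk.not_nil_iff.mp hrn
      obtain ⟨x2, hadj2, q', hq'⟩ := SimpleGraph.Walk.not_nil_iff.mp hqn
      have hxx : x1 = x2 := fan_unique_nb hn hle hx hadj1 hadj2
      have he1 : s(⟨n - 1, by omega⟩, x1) ∈ r.edges := by
        rw [hr']; simp
      have he2 : s(⟨n - 1, by omega⟩, x1) ∈ q.edges := by
        have : s(⟨n - 1, by omega⟩, x2) ∈ q.reverse.edges := by rw [hq']; simp
        rw [SimpleGraph.Walk.edges_reverse, List.mem_reverse] at this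
        rw [hxx]; exact this
      have hnd : (q.append r).edges.Nodup := by
        rw [hqr]; exact hpath.isTrail.edges_nodup
      rw [SimpleGraph.Walk.edges_append] at hnd
      exact (List.disjoint_of_nodup_append hnd) he2 he1
    exact reach_of_avoid hn p havoid u v rfl rfl
  · -- Acyclic
    intro v c hc
    let hom : H.comap (Fin.castLE (by omega : n - 1 ≤ n)) →g H :=
      ⟨Fin.castLE (by omega), fun h => h⟩
    have hinj : Function.Injective hom := by
      intro a b hab
      have hab' : Fin.castLE (by omega : n - 1 ≤ n) a =
          Fin.castLE (by omega : n - 1 ≤ n) b := hab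
      exact Fin.castLE_injective _ hab'
    exact ht.IsAcyclic (c.map hom) (hc.map hinj)

lemma fan_ext {n : ℕ} (hn : 2 < n) {H1 H2 : SimpleGraph (Fin n)}
    (h1 : H1 ≤ fanGraph n) (h2 : H2 ≤ fanGraph n)
    (hc : H1.comap (Fin.castLE (by omega : n - 1 ≤ n)) =
      H2.comap (Fin.castLE (by omega : n - 1 ≤ n)))
    (e2 : H1.Adj ⟨n - 1, by omega⟩ ⟨n - 2, by omega⟩ ↔ H2.Adj ⟨n - 1, by omega⟩ ⟨n - 2, by omega⟩)
    (e0 : H1.Adj ⟨n - 1, by omega⟩ ⟨0, by omega⟩ ↔ H2.Adj ⟨n - 1, by omega⟩ ⟨0, by omega⟩) :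
    H1 = H2 := by
  have key : ∀ (a b : Fin n), (a : ℕ) ≠ n - 1 → (b : ℕ) = n - 1 →
      (H1.Adj a b ↔ H2.Adj a b) := by
    intro a b ha hb
    have hb' : b = ⟨n - 1, by omega⟩ := Fin.ext hb
    rw [hb']
    constructor <;> intro had
    · rcases fan_adj_last hn (h1 had.symm) with h | h <;> subst h
      · exact (e0.mp had.symm).symm
      · exact (e2.mp had.symm).symm
    · rcases fan_adj_last hn (h2 had.symm) with h | h <;> subst h
      · exact (e0.mpr had.symm).symm
      · exact (e2.mpr had.symm).symm
  ext a b
  by_cases ha : (a : ℕ) = n - 1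
  · by_cases hb : (b : ℕ) = n - 1
    · have : a = b := Fin.ext (ha.trans hb.symm)
      rw [this]
      simp
    · rw [SimpleGraph.adj_comm, SimpleGraph.adj_comm H2]
      exact key b a hb ha
  · by_cases hb : (b : ℕ) = n - 1
    · exact key a b ha hb
    · have ha' : (a : ℕ) < n - 1 := by have := a.isLt; omega
      have hb' : (b : ℕ) < n - 1 := by have := b.isLt; omega
      have hfa : Fin.castLE (by omega : n - 1 ≤ n) ⟨(a : ℕ), ha'⟩ = a := Fin.ext rfl
      have hfb : Fin.castLE (by omega : n - 1 ≤ n) ⟨(b : ℕ), hb'⟩ = b := Fin.ext rfl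
      have := congrArg
        (fun G : SimpleGraph (Fin (n - 1)) => G.Adj ⟨(a : ℕ), ha'⟩ ⟨(b : ℕ), hb'⟩) hc
      simp only [SimpleGraph.comap_adj, hfa, hfb] at this
      rw [this]

/-- Given a ranking bijection `Rprev` for the spanning trees of `F_{n-1}` onto
`{1, …, t_{n-1}}`, the rank function `R` defined by the two recursive cases (for trees
containing exactly one of the edges `v_n v_{n-1}`, `v_n v_∞`) is injective on such trees,
with image contained in `{1, …, 2·t_{n-1}}`. -/
theorem fan_tree_rank_injective (n : ℕ) (hn : 3 ≤ n)
    (Rprev : SimpleGraph (Fin (n - 1)) → ℕ)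
    (hRprev : Set.BijOn Rprev {H | H ≤ fanGraph (n - 1) ∧ H.IsTree}
      (Set.Icc 1 (fanTreeCount (n - 1))))
    (R : SimpleGraph (Fin n) → ℕ)
    (hR1 : ∀ H : SimpleGraph (Fin n), H ≤ fanGraph n → H.IsTree →
      H.Adj ⟨n - 1, by omega⟩ ⟨n - 2, by omega⟩ → ¬ H.Adj ⟨n - 1, by omega⟩ ⟨0, by omega⟩ →
      R H = Rprev (SimpleGraph.comap (Fin.castLE (by omega : n - 1 ≤ n)) H))
    (hR2 : ∀ H : SimpleGraph (Fin n), H ≤ fanGraph n → H.IsTree →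
      H.Adj ⟨n - 1, by omega⟩ ⟨0, by omega⟩ → ¬ H.Adj ⟨n - 1, by omega⟩ ⟨n - 2, by omega⟩ →
      R H = 2 * fanTreeCount (n - 1)
              - Rprev (SimpleGraph.comap (Fin.castLE (by omega : n - 1 ≤ n)) H) + 1) :
    Set.InjOn R {H | H ≤ fanGraph n ∧ H.IsTree ∧
      Xor' (H.Adj ⟨n - 1, by omega⟩ ⟨n - 2, by omega⟩) (H.Adj ⟨n - 1, by omega⟩ ⟨0, by omega⟩)} ∧
    ∀ H ∈ {H : SimpleGraph (Fin n) | H ≤ fanGraph n ∧ H.IsTree ∧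
      Xor' (H.Adj ⟨n - 1, by omega⟩ ⟨n - 2, by omega⟩) (H.Adj ⟨n - 1, by omega⟩ ⟨0, by omega⟩)},
      R H ∈ Set.Icc 1 (2 * fanTreeCount (n - 1)) := by
  have key : ∀ H : SimpleGraph (Fin n), H ≤ fanGraph n → H.IsTree →
      Xor' (H.Adj ⟨n - 1, by omega⟩ ⟨n - 2, by omega⟩)
        (H.Adj ⟨n - 1, by omega⟩ ⟨0, by omega⟩) →
      (H.comap (Fin.castLE (by omega : n - 1 ≤ n)) ∈
        {H | H ≤ fanGraph (n - 1) ∧ H.IsTree}) := by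
    intro H hle htr hx
    exact comap_isTree hn hle htr hx
  have keyb : ∀ H : SimpleGraph (Fin n), H ≤ fanGraph n → H.IsTree →
      Xor' (H.Adj ⟨n - 1, by omega⟩ ⟨n - 2, by omega⟩)
        (H.Adj ⟨n - 1, by omega⟩ ⟨0, by omega⟩) →
      1 ≤ Rprev (H.comap (Fin.castLE (by omega : n - 1 ≤ n))) ∧
        Rprev (H.comap (Fin.castLE (by omega : n - 1 ≤ n))) ≤ fanTreeCount (n - 1) := by
    intro H hle htr hx
    have := hRprev.mapsTo (key H hle htr hx)
    rwa [Set.mem_Icc] at this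
  constructor
  · intro H1 hH1 H2 hH2 hRR
    obtain ⟨hle1, htr1, hx1⟩ := hH1
    obtain ⟨hle2, htr2, hx2⟩ := hH2
    obtain ⟨hr11, hr12⟩ := keyb H1 hle1 htr1 hx1
    obtain ⟨hr21, hr22⟩ := keyb H2 hle2 htr2 hx2
    rcases hx1 with ⟨ha1, hb1⟩ | ⟨hb1, ha1⟩ <;> rcases hx2 with ⟨ha2, hb2⟩ | ⟨hb2, ha2⟩
    · rw [hR1 H1 hle1 htr1 ha1 hb1, hR1 H2 hle2 htr2 ha2 hb2] at hRR
      have hcc := hRprev.injOn (key H1 hle1 htr1 (Or.inl ⟨ha1, hb1⟩))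
        (key H2 hle2 htr2 (Or.inl ⟨ha2, hb2⟩)) hRR
      exact fan_ext hn hle1 hle2 hcc (iff_of_true ha1 ha2) (iff_of_false hb1 hb2)
    · rw [hR1 H1 hle1 htr1 ha1 hb1, hR2 H2 hle2 htr2 hb2 ha2] at hRR
      omega
    · rw [hR2 H1 hle1 htr1 hb1 ha1, hR1 H2 hle2 htr2 ha2 hb2] at hRR
      omega
    · rw [hR2 H1 hle1 htr1 hb1 ha1, hR2 H2 hle2 htr2 hb2 ha2] at hRR
      have hRR' : Rprev (H1.comap (Fin.castLE (by omega : n - 1 ≤ n))) =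
          Rprev (H2.comap (Fin.castLE (by omega : n - 1 ≤ n))) := by omega
      have hcc := hRprev.injOn (key H1 hle1 htr1 (Or.inr ⟨hb1, ha1⟩))
        (key H2 hle2 htr2 (Or.inr ⟨hb2, ha2⟩)) hRR'
      exact fan_ext hn hle1 hle2 hcc (iff_of_false ha1 ha2) (iff_of_true hb1 hb2)
  · intro H hH
    obtain ⟨hle, htr, hx⟩ := hH
    obtain ⟨hr1, hr2⟩ := keyb H hle htr hx
    rw [Set.mem_Icc]
    rcases hx with ⟨ha, hb⟩ | ⟨hb, ha⟩
    · rw [hR1 H hle htr ha hb]; omega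
    · rw [hR2 H hle htr hb ha]; omega
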